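/- The Method of Equal Shares with no completion procedure is not strategyproof: there is an instance with 3 voters, 4 rounds, and price 3/4 where one voter strictly increases total satisfaction by free-riding. -/
import Mathlib


open scoped Classical

noncomputable section

/-- A one-round approval profile: each of the `n` voters approves a finite set of
alternatives (alternatives are natural numbers). -/
abbrev Profile (n : ℕ) := Fin n → Finset ℕ

/-- An online temporal voting rule: given the round index `t` and the (infinite
sequence of) approval profiles, it returns the winning alternative of round `t`.
Online rules only look at rounds `0,…,t`. -/
abbrev VRule (n : ℕ) := ℕ → (ℕ → Profile n) → ℕ

/-- Replace voter `i`'s approval set in round `t` by `S`, keeping everything else. -/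
def updateRound {n : ℕ} (A : ℕ → Profile n) (t : ℕ) (i : Fin n) (S : Finset ℕ) :
    ℕ → Profile n :=
  fun s => if s = t then Function.update (A s) i S else A s

/-- A rule is online if the round-`t` winner only depends on rounds `0,…,t`. -/
def OnlineRule {n : ℕ} (R : VRule n) : Prop :=
  ∀ (t : ℕ) (A B : ℕ → Profile n), (∀ s, s ≤ t → A s = B s) → R t A = R t B

/-- Monotonicity: if `c` wins round `t`, adding `c` to any voter's round-`t`
approval set keeps `c` the round-`t` winner. -/
def IsMonotone {n : ℕ} (R : VRule n) : Prop :=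
  ∀ (A : ℕ → Profile n) (t : ℕ) (i : Fin n),
    R t (updateRound A t i (A t i ∪ {R t A})) = R t A

/-- Online independence of irrelevant alternatives: removing a non-winning
alternative `d` from any single voter's round-`t` approvals keeps the winner. -/
def OIIA {n : ℕ} (R : VRule n) : Prop :=
  ∀ (A : ℕ → Profile n) (t : ℕ) (i : Fin n) (d : ℕ), d ≠ R t A →
    R t (updateRound A t i ((A t i).erase d)) = R t A

/-- Online strategyproofness: fixing previous rounds and the other voters, no
misreport `S` by voter `i` in round `t` can turn the round-`t` winner from a
(truthfully) unapproved alternative into an approved one. -/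
def OSP {n : ℕ} (R : VRule n) : Prop :=
  ∀ (A : ℕ → Profile n) (t : ℕ) (i : Fin n) (S : Finset ℕ),
    R t (updateRound A t i S) ∈ A t i → R t A ∈ A t i

/-- `B` deviates from `A` only in voter `i`'s reports. -/
def Deviation {n : ℕ} (i : Fin n) (A B : ℕ → Profile n) : Prop :=
  ∀ (t : ℕ) (j : Fin n), j ≠ i → B t j = A t j

/-- Satisfaction of the group `G` over rounds `0,…,T-1`: the number of rounds in
which the winner under the reported profile `B` is approved (in the reference,
e.g. truthful, profile `A`) by some member of `G`. -/
def satAgainst {n : ℕ} (R : VRule n) (B A : ℕ → Profile n) (T : ℕ)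
    (G : Finset (Fin n)) : ℕ :=
  ((Finset.range T).filter fun t => ∃ i ∈ G, R t B ∈ A t i).card

/-- (Full) strategyproofness: no unilateral misreport strictly increases a
voter's total satisfaction, measured against their truthful approvals. -/
def SP {n : ℕ} (R : VRule n) : Prop :=
  ∀ (A B : ℕ → Profile n) (i : Fin n) (T : ℕ), Deviation i A B →
    satAgainst R B A T {i} ≤ satAgainst R A A T {i}

/-- `G` is `ℓ`-cohesive in the first `T` rounds of `A`: in some `ℓ` rounds all
members of `G` approve a common alternative. -/
def Cohesive {n : ℕ} (A : ℕ → Profile n) (T : ℕ) (G : Finset (Fin n)) (ℓ : ℕ) : Prop :=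
  ∃ Rs : Finset ℕ, Rs ⊆ Finset.range T ∧ Rs.card = ℓ ∧
    ∀ t ∈ Rs, ∃ c, ∀ i ∈ G, c ∈ A t i

/-- Justified representation. -/
def SatisfiesJR {n : ℕ} (R : VRule n) : Prop :=
  ∀ (A : ℕ → Profile n) (T : ℕ) (G : Finset (Fin n)) (ℓ : ℕ),
    Cohesive A T G ℓ → min 1 (ℓ * G.card / n) ≤ satAgainst R A A T G

/-- Proportional justified representation. -/
def SatisfiesPJR {n : ℕ} (R : VRule n) : Prop :=
  ∀ (A : ℕ → Profile n) (T : ℕ) (G : Finset (Fin n)) (ℓ : ℕ),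
    Cohesive A T G ℓ → ℓ * G.card / n ≤ satAgainst R A A T G

end
noncomputable section

/-- Total payment collected for alternative `c` at personal payment cap `ρ`:
each approving voter pays `min (budget) ρ`. -/
def paySum {n : ℕ} (b : Fin n → ℝ) (Ap : Profile n) (c : ℕ) (ρ : ℝ) : ℝ :=
  ∑ i, if c ∈ Ap i then min (b i) ρ else 0

/-- `c` is affordable: some payment cap `ρ ≥ 0` collects at least the price `p`. -/
def Affordable {n : ℕ} (b : Fin n → ℝ) (Ap : Profile n) (p : ℝ) (c : ℕ) : Prop :=
  ∃ ρ : ℝ, 0 ≤ ρ ∧ p ≤ paySum b Ap c ρ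

/-- The minimal payment cap `ρ(c)` needed to pay for `c`. -/
def mesRho {n : ℕ} (b : Fin n → ℝ) (Ap : Profile n) (p : ℝ) (c : ℕ) : ℝ :=
  sInf {ρ : ℝ | 0 ≤ ρ ∧ p ≤ paySum b Ap c ρ}

/-- The MES round winner: the lexicographically first affordable alternative of
`Ct` minimizing `ρ(·)`; `none` if no alternative is affordable. -/
def mesWinner {n : ℕ} (b : Fin n → ℝ) (Ap : Profile n) (p : ℝ) (Ct : Finset ℕ) :
    Option ℕ :=
  if ∃ c ∈ Ct, Affordable b Ap p c then
    some (sInf {c : ℕ | c ∈ Ct ∧ Affordable b Ap p c ∧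
      ∀ c' ∈ Ct, Affordable b Ap p c' → mesRho b Ap p c ≤ mesRho b Ap p c'})
  else none

/-- The voters' budgets at the start of round `t` under MES with price `p`. -/
def mesB {n : ℕ} (p : ℝ) (C : ℕ → Finset ℕ) (A : ℕ → Profile n) : ℕ → Fin n → ℝ
  | 0 => fun _ => 1
  | t + 1 => fun i =>
      match mesWinner (mesB p C A t) (A t) p (C t) with
      | none => mesB p C A t i
      | some c =>
          if c ∈ A t i then
            mesB p C A t i - min (mesB p C A t i) (mesRho (mesB p C A t) (A t) p c)
          else mesB p C A t i

/-- The Method of Equal Shares (no completion procedure): the round-`t` winner,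
or `none` if MES selects no alternative in round `t`. -/
def mesRule {n : ℕ} (p : ℝ) (C : ℕ → Finset ℕ) (A : ℕ → Profile n) (t : ℕ) :
    Option ℕ :=
  mesWinner (mesB p C A t) (A t) p (C t)

/-- Satisfaction of group `G` under MES: rounds in which a winner is selected and
approved (in the reference profile `A`) by some member of `G`. -/
def mesSatAgainst {n : ℕ} (p : ℝ) (C : ℕ → Finset ℕ) (B A : ℕ → Profile n)
    (T : ℕ) (G : Finset (Fin n)) : ℕ :=
  ((Finset.range T).filter fun t => ∃ i ∈ G, ∃ c, mesRule p C B t = some c ∧ c ∈ A t i).card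

end

noncomputable section MesAux

def Aprof : ℕ → Profile 3 := fun t i => if t < 3 then {1} else {(i : ℕ) + 1}
def Bprof : ℕ → Profile 3 := fun t i =>
  if (t = 1 ∨ t = 2) ∧ i = 2 then {2} else Aprof t i

lemma mesRho_eq {n : ℕ} (b : Fin n → ℝ) (Ap : Profile n) (p : ℝ) (c : ℕ) (r : ℝ)
    (h : {ρ : ℝ | 0 ≤ ρ ∧ p ≤ paySum b Ap c ρ} = Set.Ici r) :
    mesRho b Ap p c = r := by
  unfold mesRho; rw [h, csInf_Ici]

lemma mesWinner_eq_some {n : ℕ} (b : Fin n → ℝ) (Ap : Profile n) (p : ℝ)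
    (Ct : Finset ℕ) (c : ℕ) (hc : c ∈ Ct) (haff : Affordable b Ap p c)
    (h : {x : ℕ | x ∈ Ct ∧ Affordable b Ap p x ∧
        ∀ c' ∈ Ct, Affordable b Ap p c' → mesRho b Ap p x ≤ mesRho b Ap p c'} = {c}) :
    mesWinner b Ap p Ct = some c := by
  unfold mesWinner
  rw [if_pos ⟨c, hc, haff⟩, h, csInf_singleton]

lemma mesWinner_eq_none {n : ℕ} (b : Fin n → ℝ) (Ap : Profile n) (p : ℝ)
    (Ct : Finset ℕ) (h : ¬ ∃ c ∈ Ct, Affordable b Ap p c) :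
    mesWinner b Ap p Ct = none := by
  unfold mesWinner; rw [if_neg h]

-- all-{1} profile round: constant budget β ≥ 1/4
lemma roundOne (β : ℝ) (hβ : (1/4 : ℝ) ≤ β) (Ap : Profile 3) (hAp : ∀ i, Ap i = {1}) :
    mesRho (fun _ => β) Ap (3/4) 1 = 1/4 ∧
    mesWinner (fun _ => β) Ap (3/4) ({1,2,3} : Finset ℕ) = some 1 := by
  have hpay : ∀ ρ : ℝ, paySum (fun _ => β) Ap 1 ρ = min β ρ + min β ρ + min β ρ := by
    intro ρ; simp [paySum, Fin.sum_univ_three, hAp]; ring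
  have hrho : mesRho (fun _ => β) Ap (3/4) 1 = 1/4 := by
    apply mesRho_eq
    ext ρ
    simp only [Set.mem_setOf_eq, Set.mem_Ici, hpay]
    constructor
    · rintro ⟨h0, h⟩
      have h1 : min β ρ ≤ ρ := min_le_right _ _
      linarith
    · intro h
      have h1 : (1/4 : ℝ) ≤ min β ρ := le_min hβ h
      exact ⟨by linarith, by linarith⟩
  have haff : Affordable (fun _ => β) Ap (3/4) 1 := by
    refine ⟨1/4, by norm_num, ?_⟩
    rw [hpay]
    have : min β (1/4) = 1/4 := min_eq_right hβ
    rw [this]; norm_num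
  have hnaff : ∀ c, c ≠ 1 → ¬ Affordable (fun _ => β) Ap (3/4) c := by
    rintro c hc ⟨ρ, h0, h⟩
    have : paySum (fun _ => β) Ap c ρ = 0 := by
      simp [paySum, Fin.sum_univ_three, hAp, Finset.mem_singleton, hc]
    rw [this] at h; linarith
  refine ⟨hrho, mesWinner_eq_some _ _ _ _ 1 (by simp) haff ?_⟩
  ext x
  simp only [Set.mem_setOf_eq, Set.mem_singleton_iff]
  constructor
  · rintro ⟨hx, haffx, -⟩
    by_contra hne
    exact hnaff x hne haffx
  · rintro rfl
    refine ⟨by simp, haff, ?_⟩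
    intro c' hc' haffc'
    by_cases h1 : c' = 1
    · subst h1; rfl
    · exact absurd haffc' (hnaff c' h1)

-- deviation round: budgets (β, β, 3/4) with β ≥ 3/8, profile ({1},{1},{2})
lemma roundDev (β : ℝ) (hβ : (3/8 : ℝ) ≤ β) (hβ' : β ≤ 3/4) (Ap : Profile 3)
    (hAp0 : Ap 0 = {1}) (hAp1 : Ap 1 = {1}) (hAp2 : Ap 2 = {2}) :
    mesRho (![β, β, 3/4]) Ap (3/4) 1 = 3/8 ∧
    mesWinner (![β, β, 3/4]) Ap (3/4) ({1,2,3} : Finset ℕ) = some 1 := by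
  have hpay1 : ∀ ρ : ℝ, paySum (![β, β, 3/4]) Ap 1 ρ = min β ρ + min β ρ := by
    intro ρ; simp [paySum, Fin.sum_univ_three, hAp0, hAp1, hAp2]
  have hpay2 : ∀ ρ : ℝ, paySum (![β, β, 3/4]) Ap 2 ρ = min (3/4) ρ := by
    intro ρ; simp [paySum, Fin.sum_univ_three, hAp0, hAp1, hAp2]
  have hpay3 : ∀ ρ : ℝ, paySum (![β, β, 3/4]) Ap 3 ρ = 0 := by
    intro ρ; simp [paySum, Fin.sum_univ_three, hAp0, hAp1, hAp2]
  have hrho1 : mesRho (![β, β, 3/4]) Ap (3/4) 1 = 3/8 := by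
    apply mesRho_eq
    ext ρ
    simp only [Set.mem_setOf_eq, Set.mem_Ici, hpay1]
    constructor
    · rintro ⟨h0, h⟩
      have h1 : min β ρ ≤ ρ := min_le_right _ _
      linarith
    · intro h
      have h1 : (3/8 : ℝ) ≤ min β ρ := le_min hβ h
      exact ⟨by linarith, by linarith⟩
  have hrho2 : mesRho (![β, β, 3/4]) Ap (3/4) 2 = 3/4 := by
    apply mesRho_eq
    ext ρ
    simp only [Set.mem_setOf_eq, Set.mem_Ici, hpay2]
    constructor
    · rintro ⟨h0, h⟩
      have h1 : min (3/4 : ℝ) ρ ≤ ρ := min_le_right _ _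
      linarith
    · intro h
      have h1 : (3/4 : ℝ) ≤ min (3/4 : ℝ) ρ := le_min le_rfl h
      exact ⟨by linarith, by linarith⟩
  have haff1 : Affordable (![β, β, 3/4]) Ap (3/4) 1 := by
    refine ⟨3/8, by norm_num, ?_⟩
    rw [hpay1]
    have : min β (3/8) = 3/8 := min_eq_right hβ
    rw [this]; norm_num
  have haff2 : Affordable (![β, β, 3/4]) Ap (3/4) 2 := by
    refine ⟨3/4, by norm_num, ?_⟩
    rw [hpay2, min_self]
  have hnaff3 : ¬ Affordable (![β, β, 3/4]) Ap (3/4) 3 := by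
    rintro ⟨ρ, h0, h⟩
    rw [hpay3] at h; linarith
  refine ⟨hrho1, mesWinner_eq_some _ _ _ _ 1 (by simp) haff1 ?_⟩
  ext x
  simp only [Set.mem_setOf_eq, Set.mem_singleton_iff]
  constructor
  · rintro ⟨hx, haffx, hmin⟩
    have hx' : x = 1 ∨ x = 2 ∨ x = 3 := by simpa using hx
    rcases hx' with rfl | rfl | rfl
    · rfl
    · have := hmin 1 (by simp) haff1
      rw [hrho1, hrho2] at this; linarith
    · exact absurd haffx hnaff3
  · rintro rfl
    refine ⟨by simp, haff1, ?_⟩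
    intro c' hc' haffc'
    have hc'' : c' = 1 ∨ c' = 2 ∨ c' = 3 := by simpa using hc'
    rcases hc'' with rfl | rfl | rfl
    · rfl
    · rw [hrho1, hrho2]; norm_num
    · exact absurd haffc' hnaff3

-- truthful last round: budgets all 1/4, profile i ↦ {i+1}: nothing affordable
lemma roundALast (Ap : Profile 3) (hAp : ∀ i, Ap i = {(i : ℕ) + 1}) :
    mesWinner (fun _ => (1/4 : ℝ)) Ap (3/4) ({1,2,3} : Finset ℕ) = none := by
  apply mesWinner_eq_none
  rintro ⟨c, hc, ρ, h0, h⟩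
  have hc' : c = 1 ∨ c = 2 ∨ c = 3 := by simpa using hc
  have hle : min (1/4 : ℝ) ρ ≤ 1/4 := min_le_left _ _
  have hge : (0:ℝ) ≤ min (1/4 : ℝ) ρ := le_min (by norm_num) h0
  rcases hc' with rfl | rfl | rfl <;>
    simp only [paySum, Fin.sum_univ_three, hAp] at h <;>
    norm_num at h <;> linarith

-- deviation last round: budgets (0, 0, 3/4), profile i ↦ {i+1}: 3 wins
lemma roundBLast (Ap : Profile 3) (hAp : ∀ i, Ap i = {(i : ℕ) + 1}) :
    mesWinner (![0, 0, 3/4]) Ap (3/4) ({1,2,3} : Finset ℕ) = some 3 := by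
  have hpay1 : ∀ ρ : ℝ, 0 ≤ ρ → paySum (![0, 0, 3/4]) Ap 1 ρ = 0 := by
    intro ρ h0; simp [paySum, Fin.sum_univ_three, hAp, min_eq_left h0]
  have hpay2 : ∀ ρ : ℝ, 0 ≤ ρ → paySum (![0, 0, 3/4]) Ap 2 ρ = 0 := by
    intro ρ h0; simp [paySum, Fin.sum_univ_three, hAp, min_eq_left h0]
  have hpay3 : ∀ ρ : ℝ, paySum (![0, 0, 3/4]) Ap 3 ρ = min (3/4) ρ := by
    intro ρ; simp [paySum, Fin.sum_univ_three, hAp]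
  have hnaff1 : ¬ Affordable (![0, 0, 3/4]) Ap (3/4) 1 := by
    rintro ⟨ρ, h0, h⟩; rw [hpay1 ρ h0] at h; linarith
  have hnaff2 : ¬ Affordable (![0, 0, 3/4]) Ap (3/4) 2 := by
    rintro ⟨ρ, h0, h⟩; rw [hpay2 ρ h0] at h; linarith
  have haff3 : Affordable (![0, 0, 3/4]) Ap (3/4) 3 := by
    refine ⟨3/4, by norm_num, ?_⟩
    rw [hpay3, min_self]
  refine mesWinner_eq_some _ _ _ _ 3 (by simp) haff3 ?_
  ext x
  simp only [Set.mem_setOf_eq, Set.mem_singleton_iff]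
  constructor
  · rintro ⟨hx, haffx, -⟩
    have hx' : x = 1 ∨ x = 2 ∨ x = 3 := by simpa using hx
    rcases hx' with rfl | rfl | rfl
    · exact absurd haffx hnaff1
    · exact absurd haffx hnaff2
    · rfl
  · rintro rfl
    refine ⟨by simp, haff3, ?_⟩
    intro c' hc' haffc'
    have hc'' : c' = 1 ∨ c' = 2 ∨ c' = 3 := by simpa using hc'
    rcases hc'' with rfl | rfl | rfl
    · exact absurd haffc' hnaff1
    · exact absurd haffc' hnaff2
    · rfl

lemma mesB_succ {n : ℕ} (p : ℝ) (C : ℕ → Finset ℕ) (A : ℕ → Profile n) (t : ℕ) :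
    mesB p C A (t + 1) = fun i =>
      match mesWinner (mesB p C A t) (A t) p (C t) with
      | none => mesB p C A t i
      | some c =>
          if c ∈ A t i then
            mesB p C A t i - min (mesB p C A t i) (mesRho (mesB p C A t) (A t) p c)
          else mesB p C A t i := rfl

end MesAux

/-- MES with no completion procedure is not strategyproof: with 3
voters, 4 rounds, price `3/4` and alternatives `{1,2,3}` every round, some voter
strictly increases total satisfaction by free-riding. -/
theorem mes_not_SP :
    ∃ (A B : ℕ → Profile 3) (i : Fin 3), Deviation i A B ∧
      mesSatAgainst (3 / 4 : ℝ) (fun _ => ({1, 2, 3} : Finset ℕ)) A A 4 {i} <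
        mesSatAgainst (3 / 4 : ℝ) (fun _ => ({1, 2, 3} : Finset ℕ)) B A 4 {i} := by
  classical
  refine ⟨Aprof, Bprof, 2, ?_, ?_⟩
  · intro t j hj
    simp [Bprof, hj]
  have hA0 : ∀ i, Aprof 0 i = {1} := fun i => by simp [Aprof]
  have hA1 : ∀ i, Aprof 1 i = {1} := fun i => by simp [Aprof]
  have hA2 : ∀ i, Aprof 2 i = {1} := fun i => by simp [Aprof]
  have hA3 : ∀ i, Aprof 3 i = {(i : ℕ) + 1} := fun i => by simp [Aprof]
  have hB0 : ∀ i, Bprof 0 i = {1} := fun i => by simp [Bprof, Aprof]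
  have hB1a : Bprof 1 0 = {1} := by simp [Bprof, Aprof]
  have hB1b : Bprof 1 1 = {1} := by simp [Bprof, Aprof]
  have hB1c : Bprof 1 2 = {2} := by simp [Bprof]
  have hB2a : Bprof 2 0 = {1} := by simp [Bprof, Aprof]
  have hB2b : Bprof 2 1 = {1} := by simp [Bprof, Aprof]
  have hB2c : Bprof 2 2 = {2} := by simp [Bprof]
  have hB3 : ∀ i, Bprof 3 i = {(i : ℕ) + 1} := fun i => by simp [Bprof, Aprof]
  -- truthful run
  have hbA0 : mesB (3/4 : ℝ) (fun _ => ({1,2,3} : Finset ℕ)) Aprof 0 = fun _ => (1 : ℝ) := rfl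
  have hwA0 : mesWinner (mesB (3/4 : ℝ) (fun _ => ({1,2,3} : Finset ℕ)) Aprof 0) (Aprof 0) (3/4) ({1,2,3} : Finset ℕ) = some 1 := by
    rw [hbA0]; exact (roundOne 1 (by norm_num) _ hA0).2
  have hrA0 : mesRho (mesB (3/4 : ℝ) (fun _ => ({1,2,3} : Finset ℕ)) Aprof 0) (Aprof 0) (3/4) 1 = 1/4 := by
    rw [hbA0]; exact (roundOne 1 (by norm_num) _ hA0).1
  have hbA1 : mesB (3/4 : ℝ) (fun _ => ({1,2,3} : Finset ℕ)) Aprof 1 = fun _ => (3/4 : ℝ) := by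
    funext i
    show mesB (3/4 : ℝ) (fun _ => ({1,2,3} : Finset ℕ)) Aprof (0 + 1) i = (3/4 : ℝ)
    rw [mesB_succ]
    simp only [hwA0, hrA0]
    rw [hbA0, hA0]
    norm_num
  have hwA1 : mesWinner (mesB (3/4 : ℝ) (fun _ => ({1,2,3} : Finset ℕ)) Aprof 1) (Aprof 1) (3/4) ({1,2,3} : Finset ℕ) = some 1 := by
    rw [hbA1]; exact (roundOne (3/4) (by norm_num) _ hA1).2
  have hrA1 : mesRho (mesB (3/4 : ℝ) (fun _ => ({1,2,3} : Finset ℕ)) Aprof 1) (Aprof 1) (3/4) 1 = 1/4 := by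
    rw [hbA1]; exact (roundOne (3/4) (by norm_num) _ hA1).1
  have hbA2 : mesB (3/4 : ℝ) (fun _ => ({1,2,3} : Finset ℕ)) Aprof 2 = fun _ => (1/2 : ℝ) := by
    funext i
    show mesB (3/4 : ℝ) (fun _ => ({1,2,3} : Finset ℕ)) Aprof (1 + 1) i = (1/2 : ℝ)
    rw [mesB_succ]
    simp only [hwA1, hrA1]
    rw [hbA1, hA1]
    norm_num
  have hwA2 : mesWinner (mesB (3/4 : ℝ) (fun _ => ({1,2,3} : Finset ℕ)) Aprof 2) (Aprof 2) (3/4) ({1,2,3} : Finset ℕ) = some 1 := by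
    rw [hbA2]; exact (roundOne (1/2) (by norm_num) _ hA2).2
  have hrA2 : mesRho (mesB (3/4 : ℝ) (fun _ => ({1,2,3} : Finset ℕ)) Aprof 2) (Aprof 2) (3/4) 1 = 1/4 := by
    rw [hbA2]; exact (roundOne (1/2) (by norm_num) _ hA2).1
  have hbA3 : mesB (3/4 : ℝ) (fun _ => ({1,2,3} : Finset ℕ)) Aprof 3 = fun _ => (1/4 : ℝ) := by
    funext i
    show mesB (3/4 : ℝ) (fun _ => ({1,2,3} : Finset ℕ)) Aprof (2 + 1) i = (1/4 : ℝ)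
    rw [mesB_succ]
    simp only [hwA2, hrA2]
    rw [hbA2, hA2]
    norm_num
  have hwA3 : mesWinner (mesB (3/4 : ℝ) (fun _ => ({1,2,3} : Finset ℕ)) Aprof 3) (Aprof 3) (3/4) ({1,2,3} : Finset ℕ) = none := by
    rw [hbA3]; exact roundALast _ hA3
  -- deviating run
  have hbB0 : mesB (3/4 : ℝ) (fun _ => ({1,2,3} : Finset ℕ)) Bprof 0 = fun _ => (1 : ℝ) := rfl
  have hwB0 : mesWinner (mesB (3/4 : ℝ) (fun _ => ({1,2,3} : Finset ℕ)) Bprof 0) (Bprof 0) (3/4) ({1,2,3} : Finset ℕ) = some 1 := by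
    rw [hbB0]; exact (roundOne 1 (by norm_num) _ hB0).2
  have hrB0 : mesRho (mesB (3/4 : ℝ) (fun _ => ({1,2,3} : Finset ℕ)) Bprof 0) (Bprof 0) (3/4) 1 = 1/4 := by
    rw [hbB0]; exact (roundOne 1 (by norm_num) _ hB0).1
  have hbB1 : mesB (3/4 : ℝ) (fun _ => ({1,2,3} : Finset ℕ)) Bprof 1 = ![3/4, 3/4, 3/4] := by
    funext i
    show mesB (3/4 : ℝ) (fun _ => ({1,2,3} : Finset ℕ)) Bprof (0 + 1) i = ![(3:ℝ)/4, 3/4, 3/4] i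
    rw [mesB_succ]
    simp only [hwB0, hrB0]
    rw [hbB0, hB0]
    fin_cases i <;> norm_num
  have hwB1 : mesWinner (mesB (3/4 : ℝ) (fun _ => ({1,2,3} : Finset ℕ)) Bprof 1) (Bprof 1) (3/4) ({1,2,3} : Finset ℕ) = some 1 := by
    rw [hbB1]; exact (roundDev (3/4) (by norm_num) le_rfl _ hB1a hB1b hB1c).2
  have hrB1 : mesRho (mesB (3/4 : ℝ) (fun _ => ({1,2,3} : Finset ℕ)) Bprof 1) (Bprof 1) (3/4) 1 = 3/8 := by
    rw [hbB1]; exact (roundDev (3/4) (by norm_num) le_rfl _ hB1a hB1b hB1c).1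
  have hbB2 : mesB (3/4 : ℝ) (fun _ => ({1,2,3} : Finset ℕ)) Bprof 2 = ![3/8, 3/8, 3/4] := by
    funext i
    show mesB (3/4 : ℝ) (fun _ => ({1,2,3} : Finset ℕ)) Bprof (1 + 1) i = ![(3:ℝ)/8, 3/8, 3/4] i
    rw [mesB_succ]
    simp only [hwB1, hrB1]
    rw [hbB1]
    fin_cases i <;> simp [hB1a, hB1b, hB1c] <;> norm_num
  have hwB2 : mesWinner (mesB (3/4 : ℝ) (fun _ => ({1,2,3} : Finset ℕ)) Bprof 2) (Bprof 2) (3/4) ({1,2,3} : Finset ℕ) = some 1 := by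
    rw [hbB2]; exact (roundDev (3/8) le_rfl (by norm_num) _ hB2a hB2b hB2c).2
  have hrB2 : mesRho (mesB (3/4 : ℝ) (fun _ => ({1,2,3} : Finset ℕ)) Bprof 2) (Bprof 2) (3/4) 1 = 3/8 := by
    rw [hbB2]; exact (roundDev (3/8) le_rfl (by norm_num) _ hB2a hB2b hB2c).1
  have hbB3 : mesB (3/4 : ℝ) (fun _ => ({1,2,3} : Finset ℕ)) Bprof 3 = ![0, 0, 3/4] := by
    funext i
    show mesB (3/4 : ℝ) (fun _ => ({1,2,3} : Finset ℕ)) Bprof (2 + 1) i = ![(0:ℝ), 0, 3/4] i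
    rw [mesB_succ]
    simp only [hwB2, hrB2]
    rw [hbB2]
    fin_cases i <;> simp [hB2a, hB2b, hB2c] <;> norm_num
  have hwB3 : mesWinner (mesB (3/4 : ℝ) (fun _ => ({1,2,3} : Finset ℕ)) Bprof 3) (Bprof 3) (3/4) ({1,2,3} : Finset ℕ) = some 3 := by
    rw [hbB3]; exact roundBLast _ hB3
  -- mesRule values
  have wA0 : mesRule (3/4 : ℝ) (fun _ => ({1,2,3} : Finset ℕ)) Aprof 0 = some 1 := hwA0
  have wA1 : mesRule (3/4 : ℝ) (fun _ => ({1,2,3} : Finset ℕ)) Aprof 1 = some 1 := hwA1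
  have wA2 : mesRule (3/4 : ℝ) (fun _ => ({1,2,3} : Finset ℕ)) Aprof 2 = some 1 := hwA2
  have wA3 : mesRule (3/4 : ℝ) (fun _ => ({1,2,3} : Finset ℕ)) Aprof 3 = none := hwA3
  have wB0 : mesRule (3/4 : ℝ) (fun _ => ({1,2,3} : Finset ℕ)) Bprof 0 = some 1 := hwB0
  have wB1 : mesRule (3/4 : ℝ) (fun _ => ({1,2,3} : Finset ℕ)) Bprof 1 = some 1 := hwB1
  have wB2 : mesRule (3/4 : ℝ) (fun _ => ({1,2,3} : Finset ℕ)) Bprof 2 = some 1 := hwB2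
  have wB3 : mesRule (3/4 : ℝ) (fun _ => ({1,2,3} : Finset ℕ)) Bprof 3 = some 3 := hwB3
  -- counting
  have hBsat : mesSatAgainst (3/4 : ℝ) (fun _ => ({1,2,3} : Finset ℕ)) Bprof Aprof 4 ({2} : Finset (Fin 3)) = 4 := by
    unfold mesSatAgainst
    rw [Finset.filter_true_of_mem, Finset.card_range]
    intro t ht
    simp only [Finset.mem_range] at ht
    interval_cases t
    · exact ⟨2, Finset.mem_singleton_self 2, 1, wB0, by rw [hA0]; simp⟩
    · exact ⟨2, Finset.mem_singleton_self 2, 1, wB1, by rw [hA1]; simp⟩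
    · exact ⟨2, Finset.mem_singleton_self 2, 1, wB2, by rw [hA2]; simp⟩
    · exact ⟨2, Finset.mem_singleton_self 2, 3, wB3, by rw [hA3]; simp⟩
  have hAsat : mesSatAgainst (3/4 : ℝ) (fun _ => ({1,2,3} : Finset ℕ)) Aprof Aprof 4 ({2} : Finset (Fin 3)) ≤ 3 := by
    unfold mesSatAgainst
    refine le_trans (Finset.card_le_card (?_ : _ ⊆ ({0, 1, 2} : Finset ℕ))) (by norm_num)
    intro t ht
    simp only [Finset.mem_filter, Finset.mem_range] at ht
    obtain ⟨ht4, i, hi, c, hc, -⟩ := ht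
    interval_cases t
    · simp
    · simp
    · simp
    · rw [wA3] at hc; exact absurd hc (by simp)
  rw [hBsat]
  exact lt_of_le_of_lt hAsat (by norm_num)
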